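/- A Toeplitz operator T_φ on H²(𝔻) with symbol φ ∈ L^∞(𝕋) is invertible if and only if T_φ is Fredholm and ind(T_φ) = 0. -/

import Mathlib

open MeasureTheory Complex Filter Topology AddCircle

noncomputable section

instance : Fact (0 < 2 * Real.pi) := ⟨by positivity⟩

/-- The circle, as `ℝ / 2πℤ`. -/
abbrev 𝕋c := AddCircle (2 * Real.pi)

abbrev L2C := Lp ℂ 2 (@haarAddCircle (2 * Real.pi) _)

/-- The Hardy space `H²(𝔻)`, identified with the subspace of `L²(𝕋)` of functions whose
negative Fourier coefficients vanish. -/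
def H2D : Submodule ℂ L2C where
  carrier := {f | ∀ n : ℤ, n < 0 → fourierBasis.repr f n = 0}
  add_mem' := by
    intro f g hf hg n hn
    rw [map_add]
    simp [lp.coeFn_add, hf n hn, hg n hn]
  zero_mem' := by intro n hn; rw [map_zero]; simp
  smul_mem' := by
    intro c f hf n hn
    rw [LinearIsometryEquiv.map_smul]
    simp [hf n hn]

/-- `T` is the Toeplitz operator on `H²(𝔻)` with symbol `a ∈ L^∞(𝕋)`, characterized by its
matrix elements `⟪T f, g⟫ = ⟪a·f, g⟫` for `f, g ∈ H²(𝔻)`. -/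
def IsToeplitzD (a : 𝕋c → ℂ) (T : H2D →L[ℂ] H2D) : Prop :=
  ∀ f g : H2D, (inner ℂ ((T f : L2C)) (g : L2C) : ℂ) =
    ∫ θ : 𝕋c, (starRingEnd ℂ) (a θ * ((f : L2C) : 𝕋c → ℂ) θ) * ((g : L2C) : 𝕋c → ℂ) θ
      ∂haarAddCircle

/-- Membership in (the boundary-value class of) `H^∞(𝔻)`: essentially bounded with vanishing
negative Fourier coefficients. -/
def MemHInfD (h : 𝕋c → ℂ) : Prop :=
  MemLp h ⊤ haarAddCircle ∧ ∀ n : ℤ, n < 0 → fourierCoeff h n = 0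

/-- Membership in the Sarason algebra `H^∞ + C` on the circle. -/
def MemHInfC (u : 𝕋c → ℂ) : Prop :=
  ∃ h c : 𝕋c → ℂ, MemHInfD h ∧ Continuous c ∧ u =ᵐ[haarAddCircle] h + c

/-- Membership in `QC = (H^∞+C) ∩ conj(H^∞+C)`. -/
def MemQC (u : 𝕋c → ℂ) : Prop :=
  MemHInfC u ∧ MemHInfC (fun θ => (starRingEnd ℂ) (u θ))

/-- The inverse Cayley transform `𝔠⁻¹(w) = i(1+w)/(1-w)`, as a map `𝕋 → ℝ`. -/
def cayleyInvC (θ : 𝕋c) : ℝ :=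
  (Complex.I * (1 + (toCircle θ : ℂ)) / (1 - (toCircle θ : ℂ))).re

/-- Membership in `QC(ℝ)`: the pullback of `QC` under the Cayley transform. -/
def MemQCR (φ : ℝ → ℂ) : Prop := MemQC (fun θ => φ (cayleyInvC θ))

/-- The Cayley transform `𝔠(x) = (x-i)/(x+i)` from `ℝ` to the circle `ℝ/2πℤ`. -/
def cayleyR (x : ℝ) : 𝕋c := (((x - Complex.I) / (x + Complex.I)).arg : ℝ)



variable {E F : Type*} [NormedAddCommGroup E] [NormedSpace ℂ E]
  [NormedAddCommGroup F] [NormedSpace ℂ F]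

/-- The essential spectrum of a bounded operator: the spectrum of its coset in the
Calkin algebra, i.e. `z` such that `T - z` is not invertible modulo compact operators. -/
def essSpectrum (T : E →L[ℂ] E) : Set ℂ :=
  {z | ¬ ∃ S : E →L[ℂ] E,
    IsCompactOperator ⇑(S ∘L (T - z • ContinuousLinearMap.id ℂ E) - ContinuousLinearMap.id ℂ E) ∧
    IsCompactOperator ⇑((T - z • ContinuousLinearMap.id ℂ E) ∘L S - ContinuousLinearMap.id ℂ E)}

/-- A bounded operator is Fredholm if it has closed range and finite-dimensional kernel
and cokernel. -/
def IsFredholm (T : E →L[ℂ] F) : Prop :=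
  FiniteDimensional ℂ (LinearMap.ker (T : E →ₗ[ℂ] F)) ∧ FiniteDimensional ℂ (F ⧸ LinearMap.range (T : E →ₗ[ℂ] F)) ∧
    IsClosed (Set.range T)

/-- The Fredholm index `dim ker T - dim coker T`. -/
def fredholmIndex (T : E →L[ℂ] F) : ℤ :=
  (Module.finrank ℂ (LinearMap.ker (T : E →ₗ[ℂ] F)) : ℤ) - (Module.finrank ℂ (F ⧸ LinearMap.range (T : E →ₗ[ℂ] F)) : ℤ)

/-!
An invertible operator is bijective, hence Fredholm of index zero. Conversely, a Fredholm operator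
of index zero is bijective once its kernel or its cokernel vanishes, so it is enough to know
Coburn's lemma: unless `φ = 0` a.e. (and then `T = 0` has the infinite-dimensional kernel `H²`),
`ker T` or `ker T⋆ = (range T)ᗮ` is trivial.

The `(n - m)`-th Fourier coefficient of `φ f ḡ` is the conjugate of `⟪T (zᵐ f), zⁿ g⟫`, so for
`f ∈ ker T` and `g ∈ ker T⋆` all of them vanish and `φ f ḡ = 0` a.e. A nonzero `H²` function
vanishes only on a null set (F. and M. Riesz), so `f = 0` or `g = 0` unless `φ = 0` a.e.

For the F. and M. Riesz theorem, let `S` be the closed shift-invariant subspace of `H²` functions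
vanishing on `A`. If `z S = S`, all backward shifts of any `g ∈ S` lie in `H²`, which kills every
Fourier coefficient of `g`. Otherwise a nonzero `q ∈ S ⊖ z S` satisfies `q ⊥ zⁿ q` for `n ≥ 1`, so
`|q|²` has no nonzero Fourier modes and equals `‖q‖² ≠ 0` a.e., forcing `A` to be null.
-/

open scoped ENNReal InnerProductSpace ComplexConjugate BoundedContinuousFunction

local notation "μc" => (@haarAddCircle (2 * Real.pi) _)

section MeasureSpace

variable {X : Type*} [MeasurableSpace X]

theorem MeasureTheory.Integrable.ae_eq_zero_of_forall_integral_boundedContinuous_mul_eq_zero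
    [TopologicalSpace X] [TopologicalSpace.PseudoMetrizableSpace X] [BorelSpace X]
    {μ : Measure X} {w : X → ℂ}
    (hw : Integrable w μ) (h : ∀ g : X →ᵇ ℂ, ∫ x, g x * w x ∂μ = 0) : w =ᵐ[μ] 0 := by
  -- Approximating `1_s` by bounded continuous functions in `L¹(|w| μ)` controls `∫_s w dμ`.
  let ν := μ.withDensity fun x => ‖w x‖₊
  have : IsFiniteMeasure ν := isFiniteMeasure_withDensity hw.2.ne
  refine hw.ae_eq_zero_of_forall_setIntegral_eq_zero fun s hs _ => ?_
  let f : X → ℂ := s.indicator 1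
  have hf : Integrable f ν := (integrable_const 1).indicator hs
  have hfw : Integrable (fun x => f x * w x) μ :=
    hw.bdd_mul (c := 1) (measurable_one.indicator hs).aestronglyMeasurable
      (.of_forall fun x => norm_indicator_le_norm_self 1 x |>.trans (by simp))
  rw [← integral_indicator hs]
  refine norm_le_zero_iff.mp (le_of_forall_pos_le_add fun ε hε => ?_)
  obtain ⟨g, hgf, -⟩ := hf.exists_boundedContinuous_integral_sub_le hε
  have hgw : Integrable (fun x => g x * w x) μ :=
    hw.bdd_mul (c := ‖g‖) g.continuous.aestronglyMeasurable (.of_forall g.norm_coe_le_norm)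
  calc ‖∫ x, s.indicator w x ∂μ‖ = ‖∫ x, (f x - g x) * w x ∂μ‖ := by
        simp_rw [sub_mul]
        rw [integral_sub hfw hgw, h g, sub_zero]
        congr 2 with x
        by_cases hx : x ∈ s <;> simp [f, hx]
    _ ≤ ∫ x, ‖f x - g x‖ * ‖w x‖ ∂μ := by
        simp_rw [← norm_mul]
        exact norm_integral_le_integral_norm _
    _ = ∫ x, ‖f x - g x‖ ∂ν := by
        rw [integral_withDensity_eq_integral_smul₀ hw.1.aemeasurable.nnnorm]
        congr 1 with x
        rw [NNReal.smul_def, smul_eq_mul, coe_nnnorm, mul_comm]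
    _ ≤ 0 + ε := by rw [zero_add]; exact hgf

theorem mem_ker_LpToLpRestrictCLM_iff {μ : Measure X} {p : ℝ≥0∞} [Fact (1 ≤ p)] {A : Set X}
    (hA : MeasurableSet A) (g : Lp ℂ p μ) :
    g ∈ (LpToLpRestrictCLM X ℂ ℂ μ p A).ker ↔ ∀ᵐ x ∂μ, x ∈ A → g x = 0 := by
  rw [LinearMap.mem_ker, ContinuousLinearMap.coe_coe, Lp.eq_zero_iff_ae_eq_zero,
    ← ae_restrict_iff' hA]
  exact (LpToLpRestrictCLM_coeFn ℂ A g).congr_left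

end MeasureSpace

section FourierUniqueness

variable {T : ℝ} [Fact (0 < T)]

theorem integral_continuousMap_mul_eq_zero_of_fourierCoeff_eq_zero {w : AddCircle T → ℂ}
    (hw : Integrable w haarAddCircle) (h : ∀ n, fourierCoeff w n = 0) (c : C(AddCircle T, ℂ)) :
    ∫ x, c x * w x ∂haarAddCircle = 0 := by
  let ℓ : C(AddCircle T, ℂ) →L[ℂ] ℂ :=
    ((ContinuousLinearMap.mul ℂ ℂ).lpPairing haarAddCircle ⊤ 1).flip (hw.toL1 w) ∘L
      ContinuousMap.toLp ⊤ haarAddCircle ℂ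
  have hℓ (c : C(AddCircle T, ℂ)) : ℓ c = ∫ x, c x * w x ∂haarAddCircle := by
    simp only [ℓ, ContinuousLinearMap.comp_apply, ContinuousLinearMap.flip_apply,
      ContinuousLinearMap.lpPairing_eq_integral]
    refine integral_congr_ae ?_
    filter_upwards [ContinuousMap.coeFn_toLp (𝕜 := ℂ) (p := ⊤) (μ := haarAddCircle (T := T)) c,
      hw.coeFn_toL1] with x h1 h2
    rw [h1, h2]
    rfl
  have hℓ0 : ℓ = 0 := by
    refine ContinuousLinearMap.ext_on
      (Submodule.dense_iff_topologicalClosure_eq_top.mpr span_fourier_closure_eq_top) ?_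
    rintro _ ⟨n, rfl⟩
    rw [hℓ, zero_apply, ← h (-n), fourierCoeff, neg_neg]
    rfl
  rw [← hℓ, hℓ0, zero_apply]

theorem ae_eq_zero_of_fourierCoeff_eq_zero {w : AddCircle T → ℂ}
    (hw : Integrable w haarAddCircle) (h : ∀ n, fourierCoeff w n = 0) :
    w =ᵐ[haarAddCircle] 0 :=
  hw.ae_eq_zero_of_forall_integral_boundedContinuous_mul_eq_zero fun g =>
    integral_continuousMap_mul_eq_zero_of_fourierCoeff_eq_zero hw h g.toContinuousMap

theorem fourierCoeff_const (c : ℂ) (n : ℤ) :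
    fourierCoeff (fun _ : AddCircle T => c) n = (Pi.single 0 c : ℤ → ℂ) n := by
  have : (fun _ : AddCircle T => c) = c • ⇑(fourier 0 : C(AddCircle T, ℂ)) := by
    ext x
    simp
  rw [this, fourierCoeff.const_smul, fourierCoeff_fourier, ← Pi.smul_apply, ← Pi.single_smul',
    smul_eq_mul, mul_one]

theorem ae_eq_const_of_fourierCoeff_eq_zero {w : AddCircle T → ℂ}
    (hw : Integrable w haarAddCircle) (h : ∀ n ≠ 0, fourierCoeff w n = 0) :
    ∀ᵐ x ∂haarAddCircle, w x = fourierCoeff w 0 := by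
  have hconst := integrable_const (μ := haarAddCircle (T := T)) (-fourierCoeff w 0)
  refine (ae_eq_zero_of_fourierCoeff_eq_zero (hw.add hconst) fun n => ?_).mono
    fun x hx => eq_of_sub_eq_zero hx
  rw [fourierCoeff.add hw hconst, Pi.add_apply, fourierCoeff_const]
  rcases eq_or_ne n 0 with rfl | hn
  · simp
  · simp [h n hn, hn]

end FourierUniqueness

section Fredholm

theorem isFredholm_and_fredholmIndex_eq_zero_of_bijective {T : E →L[ℂ] F}
    (h : Function.Bijective T) : IsFredholm T ∧ fredholmIndex T = 0 := by
  have hker : T.ker = ⊥ := LinearMap.ker_eq_bot.mpr h.1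
  have hrange : T.range = ⊤ := LinearMap.range_eq_top.mpr h.2
  have : Subsingleton (F ⧸ T.range) := Submodule.Quotient.subsingleton_iff.mpr hrange
  refine ⟨⟨?_, inferInstance, ?_⟩, ?_⟩
  · rw [hker]
    infer_instance
  · rw [Set.range_eq_univ.mpr h.2]
    exact isClosed_univ
  · rw [fredholmIndex, hker, finrank_bot, Module.finrank_zero_of_subsingleton, sub_self]

theorem bijective_of_fredholmIndex_eq_zero {T : E →L[ℂ] F} (hT : IsFredholm T)
    (h0 : fredholmIndex T = 0) (h : T.ker = ⊥ ∨ T.range = ⊤) : Function.Bijective T := by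
  obtain ⟨_, _, -⟩ := hT
  have hrank : Module.finrank ℂ T.ker = Module.finrank ℂ (F ⧸ T.range) := by
    rw [fredholmIndex, sub_eq_zero] at h0
    exact_mod_cast h0
  have hker : T.ker = ⊥ ↔ T.range = ⊤ := by
    rw [← Submodule.finrank_eq_zero, ← Submodule.Quotient.subsingleton_iff,
      ← Module.finrank_zero_iff (R := ℂ), hrank]
  obtain ⟨hk, hr⟩ : T.ker = ⊥ ∧ T.range = ⊤ :=
    h.elim (fun h => ⟨h, hker.mp h⟩) fun h => ⟨hker.mpr h, h⟩
  exact ⟨LinearMap.ker_eq_bot.mp hk, LinearMap.range_eq_top.mp hr⟩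

theorem finiteDimensional_of_isFredholm_zero (h : IsFredholm (0 : E →L[ℂ] F)) :
    FiniteDimensional ℂ E := by
  obtain ⟨hker, -, -⟩ := h
  rw [ContinuousLinearMap.toLinearMap_zero, LinearMap.ker_zero] at hker
  exact Module.Finite.equiv Submodule.topEquiv

theorem range_eq_top_of_ker_adjoint_eq_bot {H K : Type*} [NormedAddCommGroup H]
    [InnerProductSpace ℂ H] [CompleteSpace H] [NormedAddCommGroup K] [InnerProductSpace ℂ K]
    [CompleteSpace K] {T : H →L[ℂ] K} (hT : IsClosed (Set.range T))
    (h : (ContinuousLinearMap.adjoint T).ker = ⊥) : T.range = ⊤ := by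
  have : CompleteSpace T.range := (LinearMap.coe_range (T : H →ₗ[ℂ] K) ▸ hT).completeSpace_coe
  rwa [← Submodule.orthogonal_eq_bot_iff, ContinuousLinearMap.orthogonal_range]

end Fredholm

namespace Hardy

-- Multiplication by `zᵐ`.
def shift (m : ℤ) : L2C →L[ℂ] L2C :=
  (ContinuousLinearMap.mul ℂ ℂ).holderL μc ⊤ 2 2 (fourierLp ⊤ m)

lemma coeFn_shift (m : ℤ) (f : L2C) :
    shift m f =ᵐ[μc] fun θ => fourier m θ * f θ := by
  filter_upwards [(ContinuousLinearMap.mul ℂ ℂ).coeFn_holder (r := 2) (fourierLp ⊤ m) f,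
    coeFn_fourierLp ⊤ m] with θ h1 h2
  exact h1.trans (by rw [h2]; rfl)

lemma shift_shift (m n : ℤ) (f : L2C) : shift m (shift n f) = shift (m + n) f := by
  refine Lp.ext ?_
  filter_upwards [coeFn_shift m (shift n f), coeFn_shift n f, coeFn_shift (m + n) f]
    with θ h1 h2 h3
  rw [h1, h2, h3, ← mul_assoc, ← fourier_add]

lemma shift_zero_apply (f : L2C) : shift 0 f = f := by
  refine Lp.ext ?_
  filter_upwards [coeFn_shift 0 f] with θ h
  rw [h, fourier_zero, one_mul]

lemma norm_shift (m : ℤ) (f : L2C) : ‖shift m f‖ = ‖f‖ := by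
  rw [Lp.norm_def, Lp.norm_def, eLpNorm_congr_ae (coeFn_shift m f)]
  congr 1
  refine eLpNorm_congr_norm_ae (.of_forall fun θ => ?_)
  rw [norm_mul, fourier_apply, Circle.norm_coe, one_mul]

lemma inner_shift_left (m : ℤ) (f g : L2C) : ⟪shift m f, g⟫_ℂ = ⟪f, shift (-m) g⟫_ℂ := by
  rw [L2.inner_def, L2.inner_def]
  refine integral_congr_ae ?_
  filter_upwards [coeFn_shift m f, coeFn_shift (-m) g] with θ h1 h2
  simp only [RCLike.inner_apply, h1, h2, map_mul, fourier_neg]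
  ring

lemma fourierCoeff_shift (m k : ℤ) (f : L2C) :
    fourierCoeff (shift m f) k = fourierCoeff f (k - m) := by
  rw [fourierCoeff_congr_ae (coeFn_shift m f), fourierCoeff, fourierCoeff]
  congr 1 with θ
  rw [smul_eq_mul, smul_eq_mul, ← mul_assoc, ← fourier_add, neg_sub, sub_eq_add_neg, add_comm]

lemma fourierCoeff_conj_mul (f g : L2C) (n : ℤ) :
    fourierCoeff (fun θ => conj (f θ) * g θ) n = ⟪shift n f, g⟫_ℂ := by
  rw [L2.inner_def, fourierCoeff]
  refine integral_congr_ae ?_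
  filter_upwards [coeFn_shift n f] with θ h
  simp only [RCLike.inner_apply, h, map_mul, fourier_neg, smul_eq_mul]
  ring

lemma mem_H2D_iff (f : L2C) : f ∈ H2D ↔ ∀ n : ℤ, n < 0 → fourierCoeff f n = 0 := by
  simp only [← fourierBasis_repr]
  rfl

lemma shift_mem_H2D {m : ℤ} (hm : 0 ≤ m) {f : L2C} (hf : f ∈ H2D) : shift m f ∈ H2D := by
  rw [mem_H2D_iff] at hf ⊢
  intro n hn
  rw [fourierCoeff_shift]
  exact hf _ (by omega)

lemma isClosed_H2D : IsClosed (H2D : Set L2C) := by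
  have : (H2D : Set L2C) = ⋂ (n : ℤ) (_ : n < 0), {f | ⟪fourierBasis n, f⟫_ℂ = 0} := by
    ext f
    simp only [Set.mem_iInter, Set.mem_ofPred_eq, SetLike.mem_coe, ← HilbertBasis.repr_apply_apply]
    rfl
  rw [this]
  exact isClosed_biInter fun n _ =>
    isClosed_eq (continuous_const.inner continuous_id) continuous_const

instance : CompleteSpace H2D := isClosed_H2D.completeSpace_coe

lemma fourierLp_mem_H2D {n : ℤ} (hn : 0 ≤ n) : fourierLp 2 n ∈ H2D := by
  rw [mem_H2D_iff]
  intro m hm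
  rw [fourierCoeff_congr_ae (coeFn_fourierLp 2 n), fourierCoeff_fourier,
    Pi.single_eq_of_ne (by omega)]

lemma not_finiteDimensional_H2D : ¬ FiniteDimensional ℂ H2D := by
  intro
  let v : ℕ → H2D := fun n => ⟨fourierLp 2 n, fourierLp_mem_H2D n.cast_nonneg⟩
  have hv : LinearIndependent ℂ (H2D.subtype ∘ v) :=
    (orthonormal_fourier.comp _ Nat.cast_injective).linearIndependent
  exact Module.Finite.not_linearIndependent_of_infinite v hv.of_comp

lemma eq_zero_of_forall_shift_neg_mem_H2D {f : L2C} (h : ∀ n : ℕ, shift (-n) f ∈ H2D) :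
    f = 0 := by
  refine fourierBasis.repr.map_eq_zero_iff.mp (lp.ext (funext fun k => ?_))
  obtain ⟨n, hn⟩ : ∃ n : ℕ, k < n := ⟨k.toNat + 1, by omega⟩
  have := (mem_H2D_iff _).mp (h n) (k - n) (by omega)
  rwa [fourierCoeff_shift, sub_neg_eq_add, sub_add_cancel, ← fourierBasis_repr] at this

lemma shift_nsmul_mem {S : Submodule ℂ L2C} {k : ℤ} (hS : ∀ f ∈ S, shift k f ∈ S) (n : ℕ)
    {f : L2C} (hf : f ∈ S) : shift (n • k) f ∈ S := by
  induction n with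
  | zero => rwa [zero_smul, shift_zero_apply]
  | succ n ih => rw [succ_nsmul', ← shift_shift]; exact hS _ ih

lemma ae_conj_mul_self_eq_inner_self {q : L2C} (h : ∀ n : ℤ, 0 < n → ⟪shift n q, q⟫_ℂ = 0) :
    ∀ᵐ θ ∂μc, conj (q θ) * q θ = ⟪q, q⟫_ℂ := by
  have hint : Integrable (fun θ => conj (q θ) * q θ) μc := by
    simpa only [RCLike.inner_apply, mul_comm] using L2.integrable_inner (𝕜 := ℂ) q q
  have hcoeff (n : ℤ) (hn : n ≠ 0) : fourierCoeff (fun θ => conj (q θ) * q θ) n = 0 := by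
    rw [fourierCoeff_conj_mul]
    rcases hn.lt_or_gt with hn | hn
    · rw [inner_shift_left, ← inner_conj_symm, h (-n) (by omega), map_zero]
    · exact h n hn
  simpa only [fourierCoeff_conj_mul, shift_zero_apply]
    using ae_eq_const_of_fourierCoeff_eq_zero hint hcoeff

lemma eq_bot_or_exists_ae_conj_mul_self_eq {S : Submodule ℂ L2C} (hSc : IsClosed (S : Set L2C))
    (hSH : S ≤ H2D) (hS : ∀ f ∈ S, shift 1 f ∈ S) :
    S = ⊥ ∨ ∃ q ∈ S, q ≠ 0 ∧ ∀ᵐ θ ∂μc, conj (q θ) * q θ = ⟪q, q⟫_ℂ := by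
  let N := S.map (shift 1 : L2C →ₗ[ℂ] L2C)
  have hNS : N ≤ S := by
    rintro _ ⟨f, hf, rfl⟩
    exact hS f hf
  have hNc : IsClosed (N : Set L2C) :=
    (AddMonoidHomClass.isometry_of_norm _ (norm_shift 1)).isClosedEmbedding.isClosedMap _ hSc
  have : CompleteSpace N := hNc.completeSpace_coe
  by_cases hperp : Nᗮ ⊓ S = ⊥
  · left
    have hN : N = S := by
      simpa [hperp] using Submodule.sup_orthogonal_inf_of_hasOrthogonalProjection hNS
    have hback (f : L2C) (hf : f ∈ S) : shift (-1) f ∈ S := by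
      obtain ⟨g, hg, rfl⟩ := hN ▸ hf
      rwa [ContinuousLinearMap.coe_coe, shift_shift, neg_add_cancel, shift_zero_apply]
    refine eq_bot_iff.mpr fun f hf => ?_
    refine eq_zero_of_forall_shift_neg_mem_H2D fun n => hSH ?_
    simpa using shift_nsmul_mem hback n hf
  · right
    obtain ⟨q, ⟨hqN, hqS⟩, hq0⟩ := Submodule.exists_mem_ne_zero_of_ne_bot hperp
    refine ⟨q, hqS, hq0, ae_conj_mul_self_eq_inner_self fun n hn => ?_⟩
    refine (Submodule.mem_orthogonal N q).mp hqN _ ⟨shift (n - 1) q, ?_, ?_⟩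
    · have := shift_nsmul_mem hS (n - 1).toNat hqS
      rwa [nsmul_eq_mul, mul_one, Int.toNat_of_nonneg (by omega)] at this
    · rw [ContinuousLinearMap.coe_coe, shift_shift, add_sub_cancel]

theorem ae_ne_zero_of_mem_H2D {f : L2C} (hf : f ∈ H2D) (hf0 : f ≠ 0) : ∀ᵐ θ ∂μc, f θ ≠ 0 := by
  let A := {θ | f θ = 0}
  have hA : MeasurableSet A := (Lp.stronglyMeasurable f).measurable (measurableSet_singleton 0)
  let S := H2D ⊓ (LpToLpRestrictCLM 𝕋c ℂ ℂ μc 2 A).ker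
  have hmem (g : L2C) : g ∈ S ↔ g ∈ H2D ∧ ∀ᵐ θ ∂μc, θ ∈ A → g θ = 0 := by
    rw [Submodule.mem_inf, mem_ker_LpToLpRestrictCLM_iff hA]
  have hSc : IsClosed (S : Set L2C) := isClosed_H2D.inter (ContinuousLinearMap.isClosed_ker _)
  have hS (g : L2C) (hg : g ∈ S) : shift 1 g ∈ S := by
    rw [hmem] at hg ⊢
    refine ⟨shift_mem_H2D zero_le_one hg.1, ?_⟩
    filter_upwards [coeFn_shift 1 g, hg.2] with θ h1 h2 hθ
    rw [h1, h2 hθ, mul_zero]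
  rcases eq_bot_or_exists_ae_conj_mul_self_eq hSc inf_le_left hS with hS | ⟨q, hqS, hq0, hq⟩
  · exact absurd ((Submodule.mem_bot ℂ).mp (hS ▸ (hmem f).mpr ⟨hf, .of_forall fun _ h => h⟩)) hf0
  · filter_upwards [((hmem q).mp hqS).2, hq] with θ h1 h2 hfθ
    exact hq0 (inner_self_eq_zero.mp (by rw [← h2, h1 hfθ, mul_zero]))

end Hardy

open Hardy

section Toeplitz

lemma integral_conj_mul_shift_mul_shift (φ : 𝕋c → ℂ) (F G : L2C) (m n : ℤ) :
    ∫ θ, conj (φ θ * shift m F θ) * shift n G θ ∂μc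
      = conj (fourierCoeff (fun θ => φ θ * F θ * conj (G θ)) (n - m)) := by
  rw [fourierCoeff, ← integral_conj]
  refine integral_congr_ae ?_
  filter_upwards [coeFn_shift m F, coeFn_shift n G] with θ h1 h2
  simp only [h1, h2, smul_eq_mul, map_mul, Complex.conj_conj, sub_eq_add_neg, fourier_add,
    fourier_neg]
  ring

variable {φ : 𝕋c → ℂ} {T : H2D →L[ℂ] H2D}

lemma IsToeplitzD.eq_zero_of_ae_eq_zero (hT : IsToeplitzD φ T) (hφ : φ =ᵐ[μc] 0) : T = 0 := by
  ext1 f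
  refine (inner_self_eq_zero (𝕜 := ℂ)).mp ?_
  rw [Submodule.coe_inner, hT]
  refine integral_eq_zero_of_ae ?_
  filter_upwards [hφ] with θ h
  simp [h]

lemma IsToeplitzD.fourierCoeff_eq_zero_of_mem_ker (hT : IsToeplitzD φ T) {f g : H2D}
    (hf : T f = 0) (hg : ContinuousLinearMap.adjoint T g = 0) (k : ℤ) :
    fourierCoeff (fun θ => φ θ * (f : L2C) θ * conj ((g : L2C) θ)) k = 0 := by
  rw [← map_eq_zero (starRingEnd ℂ)]
  rcases le_or_gt 0 k with hk | hk
  · have := integral_conj_mul_shift_mul_shift φ f g 0 k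
    rw [shift_zero_apply, sub_zero] at this
    rw [← this, ← hT f ⟨shift k g, shift_mem_H2D hk g.2⟩, hf]
    exact inner_zero_left _
  · have := integral_conj_mul_shift_mul_shift φ f g (-k) 0
    rw [shift_zero_apply, zero_sub, neg_neg] at this
    rw [← this, ← hT ⟨shift (-k) f, shift_mem_H2D (by omega) f.2⟩ g, ← Submodule.coe_inner,
      ← ContinuousLinearMap.adjoint_inner_right, hg, inner_zero_right]

theorem IsToeplitzD.ker_eq_bot_or_ker_adjoint_eq_bot (hφ : MemLp φ ⊤ μc) (hT : IsToeplitzD φ T)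
    (hφ0 : ¬ φ =ᵐ[μc] 0) :
    T.ker = ⊥ ∨ (ContinuousLinearMap.adjoint T).ker = ⊥ := by
  by_contra! h
  obtain ⟨f, hf, hf0⟩ := Submodule.exists_mem_ne_zero_of_ne_bot h.1
  obtain ⟨g, hg, hg0⟩ := Submodule.exists_mem_ne_zero_of_ne_bot h.2
  have hw : Integrable (fun θ => φ θ * (f : L2C) θ * conj ((g : L2C) θ)) μc := by
    have := (L2.integrable_inner (𝕜 := ℂ) (g : L2C) f).smul_of_top_right hφ
    simp only [RCLike.inner_apply, smul_eq_mul] at this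
    refine this.congr (.of_forall fun θ => ?_)
    simp only [Pi.mul_apply]
    ring
  refine hφ0 ?_
  filter_upwards [ae_eq_zero_of_fourierCoeff_eq_zero hw (hT.fourierCoeff_eq_zero_of_mem_ker hf hg),
    ae_ne_zero_of_mem_H2D f.2 (by simpa using hf0), ae_ne_zero_of_mem_H2D g.2 (by simpa using hg0)]
    with θ hw0 hf0 hg0
  simpa [hf0, hg0] using hw0

end Toeplitz

/-- A Toeplitz operator `T_φ` on `H²(𝔻)` with symbol `φ ∈ L^∞(𝕋)` is
invertible iff it is Fredholm of index zero. -/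
theorem toeplitz_invertible_iff_fredholm_index_zero
    (φ : 𝕋c → ℂ) (hφ : MemLp φ ⊤ haarAddCircle)
    (T : H2D →L[ℂ] H2D) (hT : IsToeplitzD φ T) :
    IsUnit T ↔ (IsFredholm T ∧ fredholmIndex T = 0) := by
  rw [ContinuousLinearMap.isUnit_iff_bijective]
  refine ⟨isFredholm_and_fredholmIndex_eq_zero_of_bijective, fun ⟨hF, h0⟩ => ?_⟩
  refine bijective_of_fredholmIndex_eq_zero hF h0 ?_
  by_cases hφ0 : φ =ᵐ[haarAddCircle] 0
  · rw [hT.eq_zero_of_ae_eq_zero hφ0] at hF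
    exact absurd (finiteDimensional_of_isFredholm_zero hF) not_finiteDimensional_H2D
  · exact (hT.ker_eq_bot_or_ker_adjoint_eq_bot hφ hφ0).imp_right
      (range_eq_top_of_ker_adjoint_eq_bot hF.2.2)
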